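/- arXiv:2408.02809 — 4 statements merged into one kernel-verified Lean document; each statement's English description precedes it below -/
import Mathlib

section
/- Let u : S → ℝ be a bounded nonnegative function and r a bounded nonnegative reward. If for every state s and every action a, u(s) ≥ ∫ (r(s,a,s') + u(s')) dq(s'|s,a), then for every plan π and every state s, the total expected return I(π)(s) ≤ u(s). -/
open MeasureTheory

/-- Finite-horizon expected return of a (history-dependent, randomized) plan
`π : List S → Measure A`: `finVal q r π n h` is the expected total reward over the
next `n` periods given the history `h` (most recent state first). -/
noncomputable def finVal {S A : Type*} [MeasurableSpace S] [MeasurableSpace A] [Inhabited S]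
    (q : S → A → Measure S) (r : S → A → S → ℝ)
    (π : List S → Measure A) : ℕ → List S → ℝ
  | 0, _ => 0
  | n + 1, h => ∫ a, ∫ y, (r h.headI a y + finVal q r π n (y :: h)) ∂(q h.headI a) ∂(π h)

/-- Total expected (undiscounted) return `I(π)(s)` of the plan `π` from initial state `s`:
for nonnegative rewards it is the supremum of the finite-horizon returns. -/
noncomputable def totalReturn {S A : Type*} [MeasurableSpace S] [MeasurableSpace A] [Inhabited S]
    (q : S → A → Measure S) (r : S → A → S → ℝ)
    (π : List S → Measure A) (s : S) : ℝ :=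
  ⨆ n : ℕ, finVal q r π n [s]

lemma integral_le_const_of_le {X : Type*} [MeasurableSpace X] (μ : MeasureTheory.Measure X)
    [MeasureTheory.IsProbabilityMeasure μ] (f : X → ℝ) (c : ℝ) (hc : 0 ≤ c)
    (hfc : ∀ x, f x ≤ c) : ∫ x, f x ∂μ ≤ c := by
  by_cases hf : MeasureTheory.Integrable f μ
  · calc ∫ x, f x ∂μ ≤ ∫ _x, c ∂μ :=
          MeasureTheory.integral_mono hf (MeasureTheory.integrable_const c) hfc
    _ = c := by simp
  · rw [MeasureTheory.integral_undef hf]; exact hc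

/-- Result (ii): a bounded nonnegative excessive function `u` is an upper bound on the
income of every plan. -/
theorem excessive_bounds_income {S A : Type*} [MeasurableSpace S] [MeasurableSpace A] [Inhabited S]
    (q : S → A → Measure S) (hq : ∀ s a, IsProbabilityMeasure (q s a))
    (r : S → A → S → ℝ) (M : ℝ) (hr0 : ∀ s a y, 0 ≤ r s a y) (hrM : ∀ s a y, r s a y ≤ M)
    (hrm : ∀ s a, Measurable (r s a))
    (u : S → ℝ) (hu0 : ∀ s, 0 ≤ u s) (C : ℝ) (huC : ∀ s, u s ≤ C) (hum : Measurable u)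
    (hexc : ∀ s a, ∫ y, (r s a y + u y) ∂(q s a) ≤ u s) :
    ∀ (π : List S → Measure A), (∀ h, IsProbabilityMeasure (π h)) →
      ∀ s : S, totalReturn q r π s ≤ u s := by
  intro π hπ s
  have key : ∀ n (h : List S), finVal q r π n h ≤ u h.headI := by
    intro n
    induction n with
    | zero => intro h; simpa [finVal] using hu0 h.headI
    | succ n ih =>
      intro h
      rw [finVal]
      set s0 := h.headI with hs0
      haveI := hπ h
      refine integral_le_const_of_le (π h) _ (u s0) (hu0 s0) ?_
      intro a
      haveI := hq s0 a
      have hint2 : MeasureTheory.Integrable (fun y => r s0 a y + u y) (q s0 a) := by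
        refine MeasureTheory.Integrable.mono' (MeasureTheory.integrable_const (M + C))
          ((hrm s0 a).add hum).aestronglyMeasurable ?_
        filter_upwards with y
        rw [Real.norm_eq_abs, abs_of_nonneg (add_nonneg (hr0 s0 a y) (hu0 y))]
        exact add_le_add (hrM s0 a y) (huC y)
      have step1 : (∫ y, (r s0 a y + finVal q r π n (y :: h)) ∂(q s0 a))
          ≤ ∫ y, (r s0 a y + u y) ∂(q s0 a) := by
        by_cases hint : MeasureTheory.Integrable
            (fun y => r s0 a y + finVal q r π n (y :: h)) (q s0 a)
        · refine MeasureTheory.integral_mono hint hint2 ?_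
          intro y
          have := ih (y :: h)
          simpa using add_le_add_left this (r s0 a y)
        · rw [MeasureTheory.integral_undef hint]
          exact MeasureTheory.integral_nonneg fun y => add_nonneg (hr0 s0 a y) (hu0 y)
      exact step1.trans (hexc s0 a)
  have : ∀ n, finVal q r π n [s] ≤ u s := fun n => by simpa using key n [s]
  exact ciSup_le this
end

section
/- In Blackwell's example, the optimal return from primary state p(n) equals 2^n: for every ε > 0 there is a plan whose expected total return from p(n) exceeds 2^n − ε, while no plan exceeds 2^n. -/
/-!
The function `V` with `V (p n) = 2^n`, `V (s m) = m` (for `m ≥ 1`) and `V t = 0` is excessive: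
one step of reward plus `V` at the next state never exceeds `V`, whatever the action. Hence, by
induction on the horizon, no plan earns more than `V` from any state. Conversely, continuing
from `p n` up to `p (n + k)` and then switching collects `2^(n+k) - 1` with probability `2^-k`,
i.e. `2^n - 2^-k` in expectation.
-/

open MeasureTheory
open scoped ENNReal

/-- States of Blackwell's example: primary states `p n`, secondary states `s n`
(meaningful for `n ≥ 1`), and the terminal state `t`. -/
inductive BS
  | p : ℕ → BS
  | s : ℕ → BS
  | t : BS
  deriving DecidableEq

instance : MeasurableSpace BS := ⊤
instance : Inhabited BS := ⟨BS.t⟩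

/-- Actions: `cont` (move to the next primary state or terminal, each w.p. 1/2) and
`switch` (move to the secondary state `s (2^n - 1)`).  In secondary and terminal
states both actions have the same effect. -/
inductive Act
  | cont : Act
  | switch : Act
  deriving DecidableEq

instance : MeasurableSpace Act := ⊤
instance : Inhabited Act := ⟨Act.cont⟩

/-- Transition law of Blackwell's example. -/
noncomputable def bq : BS → Act → Measure BS
  | .p n, .cont => (1 / 2 : ℝ≥0∞) • Measure.dirac (.p (n + 1)) +
      (1 / 2 : ℝ≥0∞) • Measure.dirac .t
  | .p n, .switch => Measure.dirac (.s (2 ^ n - 1))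
  | .s n, _ => Measure.dirac (if n ≤ 1 then .t else .s (n - 1))
  | .t, _ => Measure.dirac .t

/-- Reward function: each step in a secondary state pays 1, all other steps pay 0
(the income `2^n - 1` of choosing `switch` at `p n` is collected along the
secondary chain `s (2^n - 1) → ⋯ → s 1 → t`). -/
noncomputable def br : BS → Act → BS → ℝ
  | .s _, _, _ => 1
  | _, _, _ => 0

lemma integral_le_of_forall_le {α : Type*} [MeasurableSpace α] {μ : Measure α}
    [IsProbabilityMeasure μ] {f : α → ℝ} {C : ℝ} (hC : 0 ≤ C) (hf : ∀ a, f a ≤ C) :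
    ∫ a, f a ∂μ ≤ C := by
  by_cases hint : Integrable f μ
  · simpa using integral_mono hint (integrable_const C) hf
  · rwa [integral_undef hint]

section MDP

variable {S A : Type*} [MeasurableSpace S] [MeasurableSpace A] [Inhabited S]

/-- Quantifying over all `g ≤ W` rather than taking `g = W` makes the condition applicable to
finite-horizon values without any integrability bookkeeping. -/
def IsExcessive (q : S → A → Measure S) (r : S → A → S → ℝ) (W : S → ℝ) : Prop :=
  ∀ x a (g : S → ℝ), g ≤ W → ∫ y, (r x a y + g y) ∂(q x a) ≤ W x

theorem finVal_le_of_isExcessive {q : S → A → Measure S} {r : S → A → S → ℝ} {W : S → ℝ}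
    {π : List S → Measure A} (hπ : ∀ h, IsProbabilityMeasure (π h)) (hW₀ : 0 ≤ W)
    (hW : IsExcessive q r W) (N : ℕ) (h : List S) : finVal q r π N h ≤ W h.headI := by
  induction N generalizing h with
  | zero => exact hW₀ _
  | succ N ih =>
    exact integral_le_of_forall_le (hW₀ _) fun a => hW _ a _ fun y => ih (y :: h)

theorem totalReturn_le_of_isExcessive {q : S → A → Measure S} {r : S → A → S → ℝ} {W : S → ℝ}
    {π : List S → Measure A} (hπ : ∀ h, IsProbabilityMeasure (π h)) (hW₀ : 0 ≤ W)
    (hW : IsExcessive q r W) (x : S) : totalReturn q r π x ≤ W x :=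
  ciSup_le fun N => finVal_le_of_isExcessive hπ hW₀ hW N [x]

theorem finVal_le_totalReturn_of_isExcessive {q : S → A → Measure S} {r : S → A → S → ℝ}
    {W : S → ℝ} {π : List S → Measure A} (hπ : ∀ h, IsProbabilityMeasure (π h)) (hW₀ : 0 ≤ W)
    (hW : IsExcessive q r W) (N : ℕ) (x : S) : finVal q r π N [x] ≤ totalReturn q r π x :=
  le_ciSup ⟨W x, Set.forall_mem_range.2 fun N => finVal_le_of_isExcessive hπ hW₀ hW N [x]⟩ N

theorem finVal_succ_of_forall_eq_dirac [MeasurableSingletonClass S] {q : S → A → Measure S}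
    {r : S → A → S → ℝ} {π : List S → Measure A} {h : List S} [IsProbabilityMeasure (π h)]
    {y : S} {ρ : ℝ} (hq : ∀ a, q h.headI a = Measure.dirac y) (hr : ∀ a, r h.headI a y = ρ)
    (N : ℕ) : finVal q r π (N + 1) h = ρ + finVal q r π N (y :: h) := by
  simp [finVal, hq, hr]

theorem finVal_succ_of_eq_dirac [MeasurableSingletonClass A] {q : S → A → Measure S}
    {r : S → A → S → ℝ} {π : List S → Measure A} {h : List S} {a : A}
    (hπ : π h = Measure.dirac a) (N : ℕ) :
    finVal q r π (N + 1) h = ∫ y, (r h.headI a y + finVal q r π N (y :: h)) ∂(q h.headI a) := by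
  rw [finVal, hπ, integral_dirac]

end MDP

instance : DiscreteMeasurableSpace BS := ⟨fun _ => MeasurableSpace.measurableSet_top⟩
instance : DiscreteMeasurableSpace Act := ⟨fun _ => MeasurableSpace.measurableSet_top⟩

lemma integral_bq_p_cont (f : BS → ℝ) (n : ℕ) :
    ∫ y, f y ∂bq (.p n) .cont = f (.p (n + 1)) / 2 + f .t / 2 := by
  have hint (x : BS) : Integrable f ((1 / 2 : ℝ≥0∞) • Measure.dirac x) :=
    (integrable_dirac enorm_lt_top).smul_measure (by norm_num)
  rw [bq, integral_add_measure (hint _) (hint _), integral_smul_measure, integral_smul_measure,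
    integral_dirac, integral_dirac]
  norm_num
  ring

-- `s 0` still pays `1` before reaching `t`, hence `max m 1`.
noncomputable def blackwellValue : BS → ℝ
  | .p n => 2 ^ n
  | .s m => max m 1
  | .t => 0

lemma blackwellValue_nonneg : 0 ≤ blackwellValue := by
  intro x
  cases x <;> simp only [blackwellValue, Pi.zero_apply] <;> positivity

lemma isExcessive_blackwellValue : IsExcessive bq br blackwellValue := by
  intro x a g hg
  rcases x with n | m | _
  · cases a
    · have h₁ := hg (.p (n + 1))
      have h₂ := hg .t
      simp only [blackwellValue, pow_succ] at h₁ h₂ ⊢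
      rw [integral_bq_p_cont]
      simp only [br]
      linarith
    · have h₁ := hg (.s (2 ^ n - 1))
      have h₂ : max ((2 ^ n - 1 : ℕ) : ℝ) 1 ≤ 2 ^ n :=
        max_le (by exact_mod_cast Nat.sub_le _ _) (one_le_pow₀ one_le_two)
      simp only [blackwellValue] at h₁ ⊢
      simp only [bq, br, integral_dirac]
      linarith
  · have h₁ := hg (if m ≤ 1 then .t else .s (m - 1))
    simp only [bq, br, integral_dirac]
    split_ifs at h₁ ⊢ with hm
    · simp only [blackwellValue] at h₁ ⊢
      linarith [le_max_right (m : ℝ) 1]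
    · simp only [blackwellValue] at h₁ ⊢
      have hm' : (2 : ℝ) ≤ m := by exact_mod_cast not_le.1 hm
      rw [Nat.cast_sub (by omega), Nat.cast_one, max_eq_left (by linarith)] at h₁
      rw [max_eq_left (by linarith)]
      linarith
  · have h₁ := hg .t
    simp only [bq, br, integral_dirac, blackwellValue] at h₁ ⊢
    linarith

section

variable {π : List BS → Measure Act} (hπ : ∀ h, IsProbabilityMeasure (π h))
include hπ

theorem finVal_cons_t (N : ℕ) (h : List BS) : finVal bq br π N (.t :: h) = 0 := by
  induction N generalizing h with
  | zero => rfl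
  | succ N ih =>
    rw [finVal_succ_of_forall_eq_dirac (y := .t) (ρ := 0) (fun a => by cases a <;> rfl)
      (fun _ => rfl), ih, zero_add]

theorem finVal_cons_s {m N : ℕ} (hm : 1 ≤ m) (hmN : m ≤ N) (h : List BS) :
    finVal bq br π N (.s m :: h) = m := by
  induction m generalizing N h with
  | zero => omega
  | succ m ih =>
    obtain ⟨N, rfl⟩ : ∃ N', N = N' + 1 := ⟨N - 1, by omega⟩
    rw [finVal_succ_of_forall_eq_dirac (y := if m + 1 ≤ 1 then .t else .s m) (ρ := 1)
      (fun a => by cases a <;> rfl) (fun _ => rfl)]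
    rcases Nat.eq_zero_or_pos m with rfl | hm'
    · simp [finVal_cons_t hπ]
    · rw [if_neg (by omega), ih hm' (by omega)]
      push_cast
      ring

end

def thresholdAction (c : ℕ) : BS → Act
  | .p m => if m < c then .cont else .switch
  | _ => .cont

noncomputable def thresholdPlan (c : ℕ) (h : List BS) : Measure Act :=
  Measure.dirac (thresholdAction c h.headI)

lemma isProbabilityMeasure_thresholdPlan (c : ℕ) (h : List BS) :
    IsProbabilityMeasure (thresholdPlan c h) := by
  unfold thresholdPlan
  infer_instance

theorem finVal_thresholdPlan_cons_p {m k N : ℕ} (hmk : 1 ≤ m + k) (hN : k + 2 ^ (m + k) ≤ N)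
    (h : List BS) :
    finVal bq br (thresholdPlan (m + k)) N (.p m :: h) = 2 ^ m - (2 ^ k)⁻¹ := by
  induction k generalizing m N h with
  | zero =>
    rw [add_zero] at hmk hN ⊢
    have h₂ : 2 ≤ 2 ^ m := Nat.le_self_pow (by omega) 2
    obtain ⟨N, rfl⟩ : ∃ N', N = N' + 1 := ⟨N - 1, by omega⟩
    rw [finVal_succ_of_eq_dirac (a := .switch) (by simp [thresholdPlan, thresholdAction])]
    simp only [List.headI, bq, br, integral_dirac, zero_add, pow_zero, inv_one]
    rw [finVal_cons_s (isProbabilityMeasure_thresholdPlan _) (by omega) (by omega),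
      Nat.cast_sub Nat.one_le_two_pow]
    push_cast
    ring
  | succ k ih =>
    rw [show m + (k + 1) = m + 1 + k by ring] at hN ⊢
    have h₁ : 1 ≤ 2 ^ (m + 1 + k) := Nat.one_le_two_pow
    obtain ⟨N, rfl⟩ : ∃ N', N = N' + 1 := ⟨N - 1, by omega⟩
    rw [finVal_succ_of_eq_dirac (a := .cont)
        (by simp [thresholdPlan, thresholdAction, show m < m + 1 + k by omega]),
      List.headI, integral_bq_p_cont, ih (by omega) (by omega),
      finVal_cons_t (isProbabilityMeasure_thresholdPlan _)]
    simp only [br]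
    ring

/-- In Blackwell's example the optimal return from the primary state `p n` equals `2^n`:
for every `ε > 0` some plan earns more than `2^n - ε` from `p n`, while no plan earns
more than `2^n`. -/
theorem blackwell_optimal_return_primary :
    ∀ n : ℕ, 1 ≤ n →
      (∀ ε : ℝ, 0 < ε →
        ∃ π : List BS → Measure Act, (∀ h, IsProbabilityMeasure (π h)) ∧
          totalReturn bq br π (BS.p n) > 2 ^ n - ε) ∧
      (∀ π : List BS → Measure Act, (∀ h, IsProbabilityMeasure (π h)) →
        totalReturn bq br π (BS.p n) ≤ 2 ^ n) := by
  intro n hn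
  refine ⟨fun ε hε => ?_, fun π hπ =>
    totalReturn_le_of_isExcessive hπ blackwellValue_nonneg isExcessive_blackwellValue _⟩
  obtain ⟨k, hk⟩ : ∃ k : ℕ, (2⁻¹ : ℝ) ^ k < ε := exists_pow_lt_of_lt_one hε (by norm_num)
  refine ⟨thresholdPlan (n + k), isProbabilityMeasure_thresholdPlan _, ?_⟩
  calc 2 ^ n - ε < 2 ^ n - (2 ^ k)⁻¹ := by rw [← inv_pow]; linarith
    _ = finVal bq br (thresholdPlan (n + k)) (k + 2 ^ (n + k)) [.p n] :=
      (finVal_thresholdPlan_cons_p (by omega) le_rfl []).symm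
    _ ≤ totalReturn bq br (thresholdPlan (n + k)) (.p n) :=
      finVal_le_totalReturn_of_isExcessive (isProbabilityMeasure_thresholdPlan _)
        blackwellValue_nonneg isExcessive_blackwellValue _ _
end

section
/- In Blackwell's example, any stationary plan f satisfies: either f chooses action a (continue) at every primary state, in which case I(f)(p(n)) = 0 for all n; or there is a smallest n₀ at which f chooses action b, in which case I(f)(p(n)) = 2^{n₀}·2^{-(n₀−n)} − 2^{-(n₀−n)} ≤ 2^{n₀} − 1 · 2^{-(n₀-n)} and in particular I(f)(p(n₀)) = 2^{n₀} − 1 < 2^{n₀} = u*(p(n₀)). -/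
open MeasureTheory
open scoped ENNReal

/-- The plan associated with a stationary plan `f : BS → Act`: in every period it
applies `f` to the current state, regardless of history or time. -/
noncomputable def stationaryPlan (f : BS → Act) : List BS → Measure Act :=
  fun h => Measure.dirac (f h.headI)

namespace BlackwellAux

instance : MeasurableSingletonClass BS := ⟨fun _ => MeasurableSpace.measurableSet_top⟩
instance : MeasurableSingletonClass Act := ⟨fun _ => MeasurableSpace.measurableSet_top⟩

lemma measAll (g : BS → ℝ) : Measurable g := fun _ _ => MeasurableSpace.measurableSet_top

lemma intDirac (g : BS → ℝ) (a : BS) : Integrable g (Measure.dirac a) := by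
  refine ⟨(measAll g).aestronglyMeasurable, ?_⟩
  simp [HasFiniteIntegral, MeasureTheory.lintegral_dirac]

lemma int_cont (g : BS → ℝ) (n : ℕ) :
    ∫ y, g y ∂(bq (BS.p n) Act.cont) = (1/2) * g (BS.p (n+1)) + (1/2) * g BS.t := by
  show ∫ y, g y ∂((1 / 2 : ℝ≥0∞) • Measure.dirac (BS.p (n + 1)) +
      (1 / 2 : ℝ≥0∞) • Measure.dirac BS.t) = _
  rw [integral_add_measure ((intDirac g _).smul_measure (by norm_num))
      ((intDirac g _).smul_measure (by norm_num)),
    integral_smul_measure, integral_smul_measure, integral_dirac, integral_dirac]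
  norm_num [ENNReal.toReal_div]

/-- shorthand for the value of the stationary plan -/
noncomputable def V (f : BS → Act) (k : ℕ) (x : BS) : ℝ :=
  finVal bq br (stationaryPlan f) k [x]

lemma hist (f : BS → Act) : ∀ k (h : List BS),
    finVal bq br (stationaryPlan f) k h = V f k h.headI := by
  intro k
  induction k with
  | zero => intro h; rfl
  | succ k ih =>
    intro h
    have key : ∀ (y : BS) (h' : List BS),
        finVal bq br (stationaryPlan f) k (y :: h') = V f k y := fun y h' => ih (y :: h')
    show (∫ a, ∫ y, (br h.headI a y + finVal bq br (stationaryPlan f) k (y :: h))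
        ∂(bq h.headI a) ∂(stationaryPlan f h)) = V f (k+1) h.headI
    have : V f (k+1) h.headI = ∫ a, ∫ y, (br h.headI a y +
        finVal bq br (stationaryPlan f) k (y :: [h.headI])) ∂(bq h.headI a)
        ∂(stationaryPlan f [h.headI]) := rfl
    rw [this]
    simp only [key, stationaryPlan, List.headI]

lemma Vrec (f : BS → Act) (k : ℕ) (x : BS) :
    V f (k+1) x = ∫ y, (br x (f x) y + V f k y) ∂(bq x (f x)) := by
  show (∫ a, ∫ y, (br x a y + finVal bq br (stationaryPlan f) k (y :: [x]))
      ∂(bq x a) ∂(stationaryPlan f [x])) = _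
  simp only [hist, stationaryPlan, List.headI]
  rw [integral_dirac]

lemma Vt (f : BS → Act) : ∀ k, V f k BS.t = 0 := by
  intro k
  induction k with
  | zero => rfl
  | succ k ih => rw [Vrec]; show (∫ y, (br BS.t (f BS.t) y + V f k y) ∂(Measure.dirac BS.t)) = 0
                 rw [integral_dirac]; simpa [br] using ih

lemma Vs (f : BS → Act) : ∀ k m, 1 ≤ m → V f k (BS.s m) = ((min k m : ℕ) : ℝ) := by
  intro k
  induction k with
  | zero => intro m hm; show (0:ℝ) = _; simp
  | succ k ih =>
    intro m hm
    rw [Vrec]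
    show (∫ y, (br (BS.s m) (f (BS.s m)) y + V f k y)
        ∂(Measure.dirac (if m ≤ 1 then BS.t else BS.s (m - 1)))) = _
    rw [integral_dirac]
    rcases eq_or_lt_of_le hm with h1 | h2
    · subst h1; simp [br, Vt]
    · have hm2 : ¬ m ≤ 1 := by omega
      rw [if_neg hm2]
      have : min (k+1) m = min k (m-1) + 1 := by omega
      rw [this]
      have := ih (m-1) (by omega)
      push_cast
      simp [br, this]
      ring


lemma Vp_cont (f : BS → Act) (hc : ∀ m, 1 ≤ m → f (BS.p m) = Act.cont) :
    ∀ k m, 1 ≤ m → V f k (BS.p m) = 0 := by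
  intro k
  induction k with
  | zero => intro m hm; rfl
  | succ k ih =>
    intro m hm
    rw [Vrec, hc m hm, int_cont (fun y => br (BS.p m) Act.cont y + V f k y)]
    simp [br, Vt, ih (m+1) (by omega)]

lemma Vn0 (f : BS → Act) (n₀ : ℕ) (h1 : 1 ≤ n₀) (hs : f (BS.p n₀) = Act.switch) :
    ∀ k, V f k (BS.p n₀) = ((min (k - 1) (2 ^ n₀ - 1) : ℕ) : ℝ) := by
  intro k
  induction k with
  | zero => show (0:ℝ) = _; simp
  | succ k _ =>
    rw [Vrec, hs]
    show (∫ y, (br (BS.p n₀) Act.switch y + V f k y)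
        ∂(Measure.dirac (BS.s (2 ^ n₀ - 1)))) = _
    rw [integral_dirac]
    have h2 : 1 ≤ 2 ^ n₀ - 1 := by
      have : 2 ≤ 2 ^ n₀ := by
        calc 2 = 2 ^ 1 := rfl
        _ ≤ 2 ^ n₀ := Nat.pow_le_pow_right (by norm_num) h1
      omega
    rw [Vs f k _ h2]
    simp [br]

lemma Vpn (f : BS → Act) (n₀ : ℕ) (h1 : 1 ≤ n₀) (hs : f (BS.p n₀) = Act.switch)
    (hc : ∀ m, 1 ≤ m → m < n₀ → f (BS.p m) = Act.cont) :
    ∀ d n, 1 ≤ n → n₀ = n + d →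
      ∀ k, V f k (BS.p n) = (1/2 : ℝ) ^ d * ((min ((k - d) - 1) (2 ^ n₀ - 1) : ℕ) : ℝ) := by
  intro d
  induction d with
  | zero =>
    intro n hn hd k
    have hd' : n = n₀ := by omega
    subst hd'
    simpa using Vn0 f n h1 hs k
  | succ d ih =>
    intro n hn hd k
    induction k with
    | zero => show (0:ℝ) = _; simp
    | succ k _ =>
      rw [Vrec, hc n hn (by omega), int_cont (fun y => br (BS.p n) Act.cont y + V f k y)]
      have := ih (n+1) (by omega) (by omega) k
      simp only [br, Vt, zero_add, add_zero, mul_zero]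
      rw [this]
      have hnat : (k + 1 - (d + 1)) = k - d := by omega
      rw [hnat]
      ring

lemma total_eq (f : BS → Act) (n₀ : ℕ) (h1 : 1 ≤ n₀) (hs : f (BS.p n₀) = Act.switch)
    (hc : ∀ m, 1 ≤ m → m < n₀ → f (BS.p m) = Act.cont)
    (n : ℕ) (hn : 1 ≤ n) (hnn : n ≤ n₀) :
    totalReturn bq br (stationaryPlan f) (BS.p n) = ((2:ℝ)^n₀ - 1) * (1/2) ^ (n₀ - n) := by
  have key : ∀ k, finVal bq br (stationaryPlan f) k [BS.p n]
      = (1/2:ℝ) ^ (n₀ - n) * ((min ((k - (n₀ - n)) - 1) (2 ^ n₀ - 1) : ℕ) : ℝ) :=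
    Vpn f n₀ h1 hs hc (n₀ - n) n hn (by omega)
  have hone : 1 ≤ 2 ^ n₀ := Nat.one_le_two_pow
  have hcast : ((2 ^ n₀ - 1 : ℕ) : ℝ) = 2 ^ n₀ - 1 := by push_cast [hone]; ring
  have hub : ∀ k, finVal bq br (stationaryPlan f) k [BS.p n]
      ≤ (1/2:ℝ) ^ (n₀ - n) * ((2 ^ n₀ - 1 : ℕ) : ℝ) := by
    intro k
    rw [key k]
    refine mul_le_mul_of_nonneg_left ?_ (by positivity)
    exact Nat.cast_le.mpr (min_le_right _ _)
  have hbdd : BddAbove (Set.range fun k => finVal bq br (stationaryPlan f) k [BS.p n]) := by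
    refine ⟨(1/2:ℝ) ^ (n₀ - n) * ((2 ^ n₀ - 1 : ℕ) : ℝ), ?_⟩
    rintro x ⟨k, rfl⟩
    exact hub k
  have hA : totalReturn bq br (stationaryPlan f) (BS.p n)
      = (1/2:ℝ) ^ (n₀ - n) * ((2 ^ n₀ - 1 : ℕ) : ℝ) := by
    refine le_antisymm (ciSup_le hub) (le_ciSup_of_le hbdd ((n₀ - n) + 2 ^ n₀) ?_)
    rw [key]
    have h2 : (n₀ - n) + 2 ^ n₀ - (n₀ - n) - 1 = 2 ^ n₀ - 1 := by omega
    rw [h2, min_self]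
  rw [hA, hcast]
  ring

end BlackwellAux

/-- In Blackwell's example any stationary plan `f` satisfies: if `f` chooses `cont` at
every primary state then its return from every primary state is 0; otherwise, if `n₀`
is the smallest primary index at which `f` chooses `switch`, then for `1 ≤ n ≤ n₀` its
return from `p n` is `(2^n₀ - 1)·2^(-(n₀-n))`, and in particular its return from
`p n₀` is `2^n₀ - 1 < 2^n₀`, the optimal return there. -/
theorem blackwell_stationary_value (f : BS → Act) :
    ((∀ m : ℕ, 1 ≤ m → f (BS.p m) = Act.cont) →
      ∀ n : ℕ, 1 ≤ n → totalReturn bq br (stationaryPlan f) (BS.p n) = 0) ∧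
    (∀ n₀ : ℕ, 1 ≤ n₀ → f (BS.p n₀) = Act.switch →
      (∀ m : ℕ, 1 ≤ m → m < n₀ → f (BS.p m) = Act.cont) →
      (∀ n : ℕ, 1 ≤ n → n ≤ n₀ →
        totalReturn bq br (stationaryPlan f) (BS.p n) =
          ((2 : ℝ) ^ n₀ - 1) * (1 / 2) ^ (n₀ - n)) ∧
      totalReturn bq br (stationaryPlan f) (BS.p n₀) = (2 : ℝ) ^ n₀ - 1 ∧
      ((2 : ℝ) ^ n₀ - 1) < 2 ^ n₀) := by
  constructor
  · intro hc n hn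
    have h0 : ∀ k, finVal bq br (stationaryPlan f) k [BS.p n] = 0 :=
      fun k => BlackwellAux.Vp_cont f hc k n hn
    simp [totalReturn, h0]
  · intro n₀ h1 hs hc
    refine ⟨fun n hn hnn => BlackwellAux.total_eq f n₀ h1 hs hc n hn hnn, ?_, by linarith⟩
    have := BlackwellAux.total_eq f n₀ h1 hs hc n₀ h1 le_rfl
    simpa using this
end

section
/- Consider the Markov chain on states {a, b, c} where from b the system moves to a with probability 1 and reward 0; from a it moves to c with probability 1/n (reward −1) and to b with probability 1 − 1/n (reward 0); c is absorbing with reward 0. Then the total expected reward starting from a equals −1 (the chain reaches c with probability 1), while sup over n of the one-step value tends to 0, so F(a) = sup_s F_s(a) = 0 is not attained. -/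
/-!
Visiting `a` for the `k`-th time, the chain escapes to `c` with probability `1/σ k`, so it
never reaches `c` with probability `∏ₖ (1 - 1/σ k)`. For a constant strategy this product is
`0`, and it is always below `1 - 1/σ 0 < 1`, so every value is negative. By the Weierstrass
inequality `∏ (1 - xₖ) ≥ 1 - ∑ xₖ`, the strategies `σ k = 2^(k+m+1)`, whose escape
probabilities add up to `2⁻ᵐ`, have values at least `-2⁻ᵐ`, which tends to `0`.
-/

open Filter Topology

section UnitIntervalProducts

variable {ι : Type*} {f : ι → ℝ}

theorem Finset.one_sub_sum_le_prod [DecidableEq ι] (s : Finset ι)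
    (h0 : ∀ i, 0 ≤ f i) (h1 : ∀ i, f i ≤ 1) :
    1 - ∑ i ∈ s, (1 - f i) ≤ ∏ i ∈ s, f i := by
  induction s using Finset.induction with
  | empty => simp
  | insert a s ha ih =>
    rw [Finset.sum_insert ha, Finset.prod_insert ha]
    have hsum : 0 ≤ ∑ i ∈ s, (1 - f i) := Finset.sum_nonneg fun i _ => by linarith [h1 i]
    nlinarith [mul_le_mul_of_nonneg_left ih (h0 a), h0 a, h1 a]

theorem hasProd_iInf_prod_of_nonneg_of_le_one (h0 : ∀ i, 0 ≤ f i) (h1 : ∀ i, f i ≤ 1) :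
    HasProd f (⨅ s : Finset ι, ∏ i ∈ s, f i) :=
  tendsto_atTop_ciInf (Finset.prod_anti_set_of_le_one h0 h1)
    ⟨0, by rintro _ ⟨s, rfl⟩; exact Finset.prod_nonneg fun i _ => h0 i⟩

theorem tprod_le_prod_of_nonneg_of_le_one (h0 : ∀ i, 0 ≤ f i) (h1 : ∀ i, f i ≤ 1)
    (s : Finset ι) : ∏' i, f i ≤ ∏ i ∈ s, f i := by
  rw [(hasProd_iInf_prod_of_nonneg_of_le_one h0 h1).tprod_eq]
  exact ciInf_le ⟨0, by rintro _ ⟨t, rfl⟩; exact Finset.prod_nonneg fun i _ => h0 i⟩ s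

theorem one_sub_tsum_le_tprod (h0 : ∀ i, 0 ≤ f i) (h1 : ∀ i, f i ≤ 1)
    (hsum : Summable fun i => 1 - f i) : 1 - ∑' i, (1 - f i) ≤ ∏' i, f i := by
  classical
  rw [(hasProd_iInf_prod_of_nonneg_of_le_one h0 h1).tprod_eq]
  refine le_ciInf fun s => le_trans ?_ (s.one_sub_sum_le_prod h0 h1)
  exact sub_le_sub_left (hsum.sum_le_tsum s fun i _ => by linarith [h1 i]) 1

theorem tprod_const_eq_zero_of_lt_one {c : ℝ} (h0 : 0 ≤ c) (h1 : c < 1) :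
    ∏' _ : ℕ, c = 0 := by
  have hle : ∀ k, ∏' _ : ℕ, c ≤ c ^ k := fun k => by
    simpa using tprod_le_prod_of_nonneg_of_le_one (fun _ => h0) (fun _ => h1.le) (.range k)
  refine le_antisymm (ge_of_tendsto' (tendsto_pow_atTop_nhds_zero_of_lt_one h0 h1) hle) ?_
  exact (le_ciInf fun s => Finset.prod_nonneg fun _ _ => h0).trans_eq
    (hasProd_iInf_prod_of_nonneg_of_le_one (fun _ => h0) (fun _ => h1.le)).tprod_eq.symm

end UnitIntervalProducts

/-- Ornstein's negative-reward example on states `{a, b, c}`: from `b` move to `a`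
(reward 0); from `a` move to `c` with probability `1/n` (reward `-1`) or back to `b`
with probability `1 - 1/n` (reward 0); `c` is absorbing (reward 0).  A strategy picks
the parameter `n = σ k ≥ 1` at the `k`-th visit to `a`.  Its expected total reward
from `a` is minus the probability of ever reaching `c`, namely
`(∏_k (1 - 1/σ k)) - 1`. -/
noncomputable def ornVal (σ : ℕ → ℕ) : ℝ :=
  (∏' k : ℕ, (1 - 1 / (σ k : ℝ))) - 1

theorem one_sub_one_div_natCast_nonneg {n : ℕ} (hn : 1 ≤ n) : 0 ≤ 1 - 1 / (n : ℝ) :=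
  sub_nonneg.2 (div_le_one_of_le₀ (by exact_mod_cast hn) (Nat.cast_nonneg n))

theorem one_sub_one_div_natCast_le_one (n : ℕ) : 1 - 1 / (n : ℝ) ≤ 1 :=
  sub_le_self 1 (by positivity)

theorem ornVal_const {n : ℕ} (hn : 1 ≤ n) : ornVal (fun _ => n) = -1 := by
  have hpos : 0 < 1 / (n : ℝ) := by positivity
  rw [ornVal, tprod_const_eq_zero_of_lt_one (one_sub_one_div_natCast_nonneg hn) (by linarith)]
  ring

theorem ornVal_lt_zero {σ : ℕ → ℕ} (hσ : ∀ k, 1 ≤ σ k) : ornVal σ < 0 := by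
  have hle := tprod_le_prod_of_nonneg_of_le_one (fun k => one_sub_one_div_natCast_nonneg (hσ k))
    (fun k => one_sub_one_div_natCast_le_one (σ k)) {0}
  have hpos : 0 < 1 / (σ 0 : ℝ) := by have := hσ 0; positivity
  rw [Finset.prod_singleton] at hle
  rw [ornVal]
  linarith

theorem neg_tsum_le_ornVal {σ : ℕ → ℕ} (hσ : ∀ k, 1 ≤ σ k)
    (hsum : Summable fun k => 1 / (σ k : ℝ)) : -∑' k, 1 / (σ k : ℝ) ≤ ornVal σ := by
  have := one_sub_tsum_le_tprod (fun k => one_sub_one_div_natCast_nonneg (hσ k))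
    (fun k => one_sub_one_div_natCast_le_one (σ k)) (by simpa using hsum)
  simp only [sub_sub_cancel] at this
  rw [ornVal]
  linarith

theorem neg_half_pow_le_ornVal (m : ℕ) :
    -(1 / 2 : ℝ) ^ m ≤ ornVal (fun k => 2 ^ (k + m + 1)) := by
  have hterm (k : ℕ) : 1 / ((2 ^ (k + m + 1) : ℕ) : ℝ) = (1 / 2 : ℝ) ^ m / 2 * (1 / 2) ^ k := by
    push_cast
    rw [one_div_pow, one_div_pow, pow_add, pow_add]
    field_simp
  have hgeom : HasSum (fun k => 1 / ((2 ^ (k + m + 1) : ℕ) : ℝ)) ((1 / 2) ^ m) := by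
    simpa only [hterm, div_mul_cancel₀ ((1 / 2 : ℝ) ^ m) two_ne_zero] using
      hasSum_geometric_two.mul_left ((1 / 2 : ℝ) ^ m / 2)
  rw [← hgeom.tsum_eq]
  exact neg_tsum_le_ornVal (fun k => Nat.one_le_two_pow) hgeom.summable

/-- Under each constant strategy the chain reaches `c` with probability 1 and the total
expected reward from `a` equals `-1`; nevertheless `F(a) = sup_σ F_σ(a) = 0`, and this
supremum is attained by no strategy. -/
theorem ornstein_negative_example :
    (∀ n : ℕ, 1 ≤ n → ornVal (fun _ => n) = -1) ∧
      IsLUB {v : ℝ | ∃ σ : ℕ → ℕ, (∀ k, 1 ≤ σ k) ∧ v = ornVal σ} 0 ∧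
      (∀ σ : ℕ → ℕ, (∀ k, 1 ≤ σ k) → ornVal σ < 0) := by
  refine ⟨fun n hn => ornVal_const hn, ⟨?_, fun b hb => ?_⟩, fun σ hσ => ornVal_lt_zero hσ⟩
  · rintro v ⟨σ, hσ, rfl⟩
    exact (ornVal_lt_zero hσ).le
  · have hlim : Tendsto (fun m : ℕ => -(1 / 2 : ℝ) ^ m) atTop (𝓝 0) := by
      simpa using (tendsto_pow_atTop_nhds_zero_of_lt_one (by norm_num : (0 : ℝ) ≤ 1 / 2)
        (by norm_num)).neg
    exact le_of_tendsto' hlim fun m =>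
      (neg_half_pow_le_ornVal m).trans (hb ⟨_, fun k => Nat.one_le_two_pow, rfl⟩)
end
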